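/- arXiv:1707.01601 — 2 statements merged into one kernel-verified Lean document; each statement's English description precedes it below -/
import Mathlib

section
/- Let G be an infinite connected simple graph of bounded degree with minimal degree at least 2, and let f be a sink-free, source-free orientation of its edges. Then the map e ↦ f(e), viewed as a map from the line graph G_E to the symmetric oriented line graph G_{→E}, satisfies d_{G_E}(e,e') ≤ d_{G_{→E}}(f(e),f(e')) ≤ 2·d_{G_E}(e,e') for all edges e, e' of G. -/
/-- The symmetric oriented line graph of `G`: its vertices are the directed edges of
`G` (pairs `(a₁,a₂)` with `a₁ ~ a₂`); directed edges `a` and `b` are adjacent iff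
either `a₊ = b₋` and (`deg a₊ = 1` or `a₋ ≠ b₊`), or `a₋ = b₊` and (`deg b₊ = 1` or
`b₋ ≠ a₊`). -/
def symOrLineGraph {V : Type*} (G : SimpleGraph V) [G.LocallyFinite] :
    SimpleGraph (V × V) :=
  SimpleGraph.fromRel (fun a b =>
    G.Adj a.1 a.2 ∧ G.Adj b.1 b.2 ∧
      ((a.2 = b.1 ∧ (G.degree a.2 = 1 ∨ a.1 ≠ b.2)) ∨
       (a.1 = b.2 ∧ (G.degree b.2 = 1 ∨ b.1 ≠ a.2))))

/-! A head-to-tail pair of oriented edges is adjacent in `G_{→E}`. Two edges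
sharing a vertex `v` are either oriented head-to-tail at `v`, or both leave (enter) `v`;
in the latter case an edge entering (leaving) `v`, which exists since `f` has no sources
(sinks), connects them in two steps. Conversely, adjacent directed edges share a vertex, so
a walk in `G_{→E}` projects to a walk in `G_E` that is no longer. -/

namespace SimpleGraph

section Lipschitz

variable {α β : Type*} {H : SimpleGraph α} {K : SimpleGraph β} {φ : α → β} {k : ℕ}

theorem Walk.exists_walk_map_length_le
    (hφ : ∀ x y, H.Adj x y → ∃ q : K.Walk (φ x) (φ y), q.length ≤ k) {x y : α}
    (p : H.Walk x y) : ∃ q : K.Walk (φ x) (φ y), q.length ≤ k * p.length := by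
  induction p with
  | nil => exact ⟨.nil, by simp⟩
  | cons h _ ih =>
    obtain ⟨q₁, hq₁⟩ := hφ _ _ h
    obtain ⟨q₂, hq₂⟩ := ih
    refine ⟨q₁.append q₂, ?_⟩
    simp only [Walk.length_append, Walk.length_cons, mul_add, mul_one]
    omega

theorem Reachable.map_of_adj
    (hφ : ∀ x y, H.Adj x y → ∃ q : K.Walk (φ x) (φ y), q.length ≤ k) {x y : α}
    (h : H.Reachable x y) : K.Reachable (φ x) (φ y) :=
  h.elim fun p => ⟨(p.exists_walk_map_length_le hφ).choose⟩

theorem Reachable.dist_map_le_mul_dist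
    (hφ : ∀ x y, H.Adj x y → ∃ q : K.Walk (φ x) (φ y), q.length ≤ k) {x y : α}
    (h : H.Reachable x y) : K.dist (φ x) (φ y) ≤ k * H.dist x y := by
  obtain ⟨p, hp⟩ := h.exists_walk_length_eq_dist
  obtain ⟨q, hq⟩ := p.exists_walk_map_length_le hφ
  exact (dist_le q).trans (hp ▸ hq)

end Lipschitz

end SimpleGraph

open SimpleGraph

section SymOrLineGraph

variable {V : Type*} {G : SimpleGraph V}

theorem symOrLineGraph_adj_of_snd_eq_fst [G.LocallyFinite] {a b : V × V} (ha : G.Adj a.1 a.2)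
    (hb : G.Adj b.1 b.2) (hab : a.2 = b.1) (hba : a.1 ≠ b.2) :
    (symOrLineGraph G).Adj a b := by
  refine (fromRel_adj _ _ _).2 ⟨?_, .inl ⟨ha, hb, .inl ⟨hab, .inr hba⟩⟩⟩
  rintro rfl
  exact ha.ne' hab

theorem exists_mem_of_symOrLineGraph_adj [G.LocallyFinite] {a b : V × V}
    (h : (symOrLineGraph G).Adj a b) :
    G.Adj b.1 b.2 ∧ ∃ v, v ∈ s(a.1, a.2) ∧ v ∈ s(b.1, b.2) := by
  obtain ⟨-, ⟨-, hb, ⟨hv, -⟩ | ⟨hv, -⟩⟩ | ⟨hb, -, ⟨hv, -⟩ | ⟨hv, -⟩⟩⟩ :=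
    (fromRel_adj _ _ _).1 h
  · exact ⟨hb, a.2, by simp, by simp [hv]⟩
  · exact ⟨hb, a.1, by simp, by simp [hv]⟩
  · exact ⟨hb, b.2, by simp [hv], by simp⟩
  · exact ⟨hb, b.1, by simp [hv], by simp⟩

theorem exists_lineGraph_walk_length_le [G.LocallyFinite] {a b : V × V}
    (p : (symOrLineGraph G).Walk a b) {ea eb : G.edgeSet} (ha : s(a.1, a.2) = ea)
    (hb : s(b.1, b.2) = eb) :
    ∃ q : G.lineGraph.Walk ea eb, q.length ≤ p.length := by
  induction p generalizing ea with
  | nil => exact ⟨Walk.nil.copy rfl (Subtype.ext (ha.symm.trans hb)), by simp⟩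
  | @cons a c b h p ih =>
    obtain ⟨hc, v, hva, hvc⟩ := exists_mem_of_symOrLineGraph_adj h
    let ec : G.edgeSet := ⟨s(c.1, c.2), hc⟩
    obtain ⟨q, hq⟩ := ih (ea := ec) rfl hb
    by_cases hne : ea = ec
    · exact ⟨q.copy hne.symm rfl, by simp only [Walk.length_copy, Walk.length_cons]; omega⟩
    · have hadj : G.lineGraph.Adj ea ec :=
        lineGraph_adj_iff_exists.2 ⟨hne, v, ha ▸ hva, hvc⟩
      exact ⟨.cons hadj q, by simp only [Walk.length_cons]; omega⟩

theorem lineGraph_reachable_of_symOrLineGraph_reachable [G.LocallyFinite] {a b : V × V}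
    (h : (symOrLineGraph G).Reachable a b) {ea eb : G.edgeSet} (ha : s(a.1, a.2) = ea)
    (hb : s(b.1, b.2) = eb) : G.lineGraph.Reachable ea eb :=
  h.elim fun p => ⟨(exists_lineGraph_walk_length_le p ha hb).choose⟩

theorem lineGraph_dist_le_symOrLineGraph_dist [G.LocallyFinite] {a b : V × V}
    (h : (symOrLineGraph G).Reachable a b) {ea eb : G.edgeSet} (ha : s(a.1, a.2) = ea)
    (hb : s(b.1, b.2) = eb) : G.lineGraph.dist ea eb ≤ (symOrLineGraph G).dist a b := by
  obtain ⟨p, hp⟩ := h.exists_walk_length_eq_dist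
  obtain ⟨q, hq⟩ := exists_lineGraph_walk_length_le p ha hb
  exact (dist_le q).trans (hp ▸ hq)

section Orientation

variable {f : G.edgeSet → V × V} (hor : ∀ e : G.edgeSet, s((f e).1, (f e).2) = (e : Sym2 V))
include hor

theorem adj_of_orientation (e : G.edgeSet) : G.Adj (f e).1 (f e).2 := by
  simpa [← hor e] using e.2

theorem orientation_not_reverse {d e : G.edgeSet} (h₁ : (f d).1 = (f e).2)
    (h₂ : (f d).2 = (f e).1) : False := by
  have hde : d = e := Subtype.ext <| by rw [← hor d, ← hor e, h₁, h₂, Sym2.eq_swap]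
  subst hde
  exact (adj_of_orientation hor d).ne h₁

theorem symOrLineGraph_adj_orientation [G.LocallyFinite] {d e : G.edgeSet} (h : (f d).2 = (f e).1) :
    (symOrLineGraph G).Adj (f d) (f e) :=
  symOrLineGraph_adj_of_snd_eq_fst (adj_of_orientation hor d) (adj_of_orientation hor e) h
    fun h' => orientation_not_reverse hor h' h

theorem exists_symOrLineGraph_walk_length_le_two [G.LocallyFinite]
    (htail : ∀ v : V, ∃ e : G.edgeSet, (f e).1 = v)
    (hhead : ∀ v : V, ∃ e : G.edgeSet, (f e).2 = v) {e e' : G.edgeSet}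
    (h : G.lineGraph.Adj e e') : ∃ q : (symOrLineGraph G).Walk (f e) (f e'), q.length ≤ 2 := by
  obtain ⟨-, v, hv, hv'⟩ := lineGraph_adj_iff_exists.1 h
  rw [← hor e, Sym2.mem_iff] at hv
  rw [← hor e', Sym2.mem_iff] at hv'
  rcases hv with rfl | rfl <;> rcases hv' with hv' | hv'
  · obtain ⟨d, hd⟩ := hhead (f e).1
    exact ⟨.cons (symOrLineGraph_adj_orientation hor hd).symm
      (.cons (symOrLineGraph_adj_orientation hor (hd.trans hv')) .nil), by simp⟩
  · exact ⟨(symOrLineGraph_adj_orientation hor hv'.symm).symm.toWalk, by simp⟩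
  · exact ⟨(symOrLineGraph_adj_orientation hor hv').toWalk, by simp⟩
  · obtain ⟨c, hc⟩ := htail (f e).2
    exact ⟨.cons (symOrLineGraph_adj_orientation hor hc.symm)
      (.cons (symOrLineGraph_adj_orientation hor (hv'.symm.trans hc.symm)).symm .nil), by simp⟩

end Orientation

end SymOrLineGraph

theorem stmt12_general {V : Type*} (G : SimpleGraph V) [G.LocallyFinite]
    (f : G.edgeSet → V × V)
    (hor : ∀ e : G.edgeSet, Sym2.mk (f e).1 (f e).2 = (e : Sym2 V))
    (htail : ∀ v : V, ∃ e : G.edgeSet, (f e).1 = v)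
    (hhead : ∀ v : V, ∃ e : G.edgeSet, (f e).2 = v)
    (e e' : G.edgeSet) :
    G.lineGraph.dist e e' ≤ (symOrLineGraph G).dist (f e) (f e') ∧
      (symOrLineGraph G).dist (f e) (f e') ≤ 2 * G.lineGraph.dist e e' := by
  have hstep : ∀ x y, G.lineGraph.Adj x y →
      ∃ q : (symOrLineGraph G).Walk (f x) (f y), q.length ≤ 2 :=
    fun _ _ => exists_symOrLineGraph_walk_length_le_two hor htail hhead
  by_cases hreach : G.lineGraph.Reachable e e'
  · exact ⟨lineGraph_dist_le_symOrLineGraph_dist (hreach.map_of_adj hstep) (hor e) (hor e'),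
      hreach.dist_map_le_mul_dist hstep⟩
  · have hreach' : ¬(symOrLineGraph G).Reachable (f e) (f e') := fun h =>
      hreach (lineGraph_reachable_of_symOrLineGraph_reachable h (hor e) (hor e'))
    simp [dist_eq_zero_of_not_reachable hreach, dist_eq_zero_of_not_reachable hreach']

/-- Given a sink-free, source-free orientation `f` of the edges of an infinite
connected bounded-degree graph of minimal degree at least 2, the map `e ↦ f(e)` from
the line graph `G_E` to the symmetric oriented line graph `G_{→E}` satisfies
`d_{G_E}(e,e') ≤ d_{G_{→E}}(f(e),f(e')) ≤ 2 d_{G_E}(e,e')`. -/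
theorem stmt12 {V : Type*} [Infinite V] (G : SimpleGraph V) [G.LocallyFinite]
    (hconn : G.Connected) (hbdd : ∃ D : ℕ, ∀ v : V, G.degree v ≤ D)
    (hdeg : ∀ v : V, 2 ≤ G.degree v)
    (f : G.edgeSet → V × V)
    (hor : ∀ e : G.edgeSet, Sym2.mk (f e).1 (f e).2 = (e : Sym2 V))
    (htail : ∀ v : V, ∃ e : G.edgeSet, (f e).1 = v)
    (hhead : ∀ v : V, ∃ e : G.edgeSet, (f e).2 = v)
    (e e' : G.edgeSet) :
    G.lineGraph.dist e e' ≤ (symOrLineGraph G).dist (f e) (f e') ∧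
      (symOrLineGraph G).dist (f e) (f e') ≤ 2 * G.lineGraph.dist e e' :=
  stmt12_general G f hor htail hhead e e'
end

section
/- Let P be an irreducible Markov kernel on a countable state space, and let P̂ = ∑_{i=0}^m p_i P^i with ∑ p_i = 1 and p_0 > 0. Then for every state x, ∑_{n≥0} P̂^n(x,x) ≤ (1-p_0)^{-1} ∑_{n≥0} P^n(x,x). -/
/-!
With `f = ∑ᵢ pᵢ Xⁱ`, the `n`-step kernel of `P̂ = f(P)` is `∑ₖ [Xᵏ] fⁿ · Pᵏ`, so
`∑ₙ P̂ⁿ(x,x) = ∑ₖ (∑ₙ [Xᵏ] fⁿ) Pᵏ(x,x)`. Each coefficient sum is at most `(1 - p₀)⁻¹`: for `k = 0`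
it is the geometric series `∑ₙ p₀ⁿ`, and for `k > 0` the recursion `fⁿ⁺¹ = f · fⁿ` bounds it
inductively by `(∑ᵢ pᵢ) (1 - p₀)⁻¹`.
-/

open ENNReal PowerSeries Finset

theorem ENNReal.tsum_sum_antidiagonal (F : ℕ × ℕ → ℝ≥0∞) :
    ∑' n, ∑ ij ∈ antidiagonal n, F ij = ∑' ij, F ij := by
  rw [← HasAntidiagonal.sigmaAntidiagonalEquivProd.tsum_eq, ENNReal.tsum_sigma']
  exact tsum_congr fun n => (Finset.tsum_subtype (antidiagonal n) F).symm

theorem chapman_kolmogorov {V : Type*} [DecidableEq V] (P : V → V → ℝ≥0∞)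
    (Ppow : ℕ → V → V → ℝ≥0∞)
    (hPpow0 : ∀ x y, Ppow 0 x y = if x = y then 1 else 0)
    (hPpowS : ∀ n x y, Ppow (n + 1) x y = ∑' z, Ppow n x z * P z y)
    (a b : ℕ) (x y : V) : Ppow (a + b) x y = ∑' z, Ppow a x z * Ppow b z y := by
  induction b generalizing y with
  | zero => simp [hPpow0]
  | succ b ih =>
    calc Ppow (a + (b + 1)) x y = ∑' w, (∑' z, Ppow a x z * Ppow b z w) * P w y := by
          simp only [← add_assoc, hPpowS, ih]
      _ = ∑' z, Ppow a x z * ∑' w, Ppow b z w * P w y := by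
          simp only [← ENNReal.tsum_mul_right, ← ENNReal.tsum_mul_left, mul_assoc]
          exact ENNReal.tsum_comm
      _ = ∑' z, Ppow a x z * Ppow (b + 1) z y := by simp only [hPpowS]

namespace PowerSeries

variable {V : Type*}

/-- `f(P) = ∑ₖ fₖ Pᵏ`, when `K k` is the `k`-step kernel of `P`. -/
noncomputable def kernelEval (f : ℝ≥0∞⟦X⟧) (K : ℕ → V → V → ℝ≥0∞) (x y : V) : ℝ≥0∞ :=
  ∑' k, coeff k f * K k x y

theorem kernelEval_one (K : ℕ → V → V → ℝ≥0∞) (x y : V) : kernelEval 1 K x y = K 0 x y := by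
  rw [kernelEval, tsum_eq_single 0 fun k hk => by simp [coeff_one, hk]]
  simp

theorem kernelEval_mul {K : ℕ → V → V → ℝ≥0∞}
    (hK : ∀ a b x y, K (a + b) x y = ∑' z, K a x z * K b z y) (f g : ℝ≥0∞⟦X⟧) (x y : V) :
    kernelEval (f * g) K x y = ∑' z, kernelEval f K x z * kernelEval g K z y := by
  calc kernelEval (f * g) K x y
      = ∑' n, ∑ ij ∈ antidiagonal n, ∑' z,
          coeff ij.1 f * K ij.1 x z * (coeff ij.2 g * K ij.2 z y) := by
        refine tsum_congr fun n => ?_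
        rw [coeff_mul, sum_mul]
        refine sum_congr rfl fun ij hij => ?_
        rw [← mem_antidiagonal.mp hij, hK, ← ENNReal.tsum_mul_left]
        exact tsum_congr fun z => by ring
    _ = ∑' z, ∑' n, ∑ ij ∈ antidiagonal n,
          coeff ij.1 f * K ij.1 x z * (coeff ij.2 g * K ij.2 z y) := by
        rw [ENNReal.tsum_comm]
        exact tsum_congr fun n => (Summable.tsum_finsetSum fun _ _ => ENNReal.summable).symm
    _ = ∑' z, kernelEval f K x z * kernelEval g K z y := by
        refine tsum_congr fun z => ?_
        rw [ENNReal.tsum_sum_antidiagonal, ENNReal.tsum_prod', kernelEval, kernelEval,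
          ← ENNReal.tsum_mul_right]
        exact tsum_congr fun i => by rw [← ENNReal.tsum_mul_left]

theorem eq_kernelEval_pow {K R : ℕ → V → V → ℝ≥0∞} {f : ℝ≥0∞⟦X⟧}
    (hK : ∀ a b x y, K (a + b) x y = ∑' z, K a x z * K b z y)
    (hR0 : ∀ x y, R 0 x y = K 0 x y)
    (hRS : ∀ n x y, R (n + 1) x y = ∑' z, R n x z * kernelEval f K z y)
    (n : ℕ) (x y : V) : R n x y = kernelEval (f ^ n) K x y := by
  induction n generalizing y with
  | zero => rw [hR0, pow_zero, kernelEval_one]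
  | succ n ih => simp only [hRS, ih, pow_succ, kernelEval_mul hK]

theorem sum_range_coeff_pow_le {f : ℝ≥0∞⟦X⟧} (hf : ∑' i, coeff i f ≤ 1) (N k : ℕ) :
    ∑ n ∈ range N, coeff k (f ^ n) ≤ (1 - constantCoeff f)⁻¹ := by
  induction N generalizing k with
  | zero => simp
  | succ N ih =>
    rcases k.eq_zero_or_pos with rfl | hk
    · calc ∑ n ∈ range (N + 1), coeff 0 (f ^ n) = ∑ n ∈ range (N + 1), constantCoeff f ^ n := by
            simp [coeff_zero_eq_constantCoeff_apply]
        _ ≤ (1 - constantCoeff f)⁻¹ :=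
            ENNReal.tsum_geometric (constantCoeff f) ▸ ENNReal.sum_le_tsum _
    · calc ∑ n ∈ range (N + 1), coeff k (f ^ n)
          = ∑ ij ∈ antidiagonal k, coeff ij.1 f * ∑ n ∈ range N, coeff ij.2 (f ^ n) := by
            rw [sum_range_succ', pow_zero, coeff_one, if_neg hk.ne', add_zero]
            simp only [pow_succ', coeff_mul, mul_sum]
            exact sum_comm
        _ ≤ ∑ ij ∈ antidiagonal k, coeff ij.1 f * (1 - constantCoeff f)⁻¹ := by
            gcongr with ij; exact ih _
        _ = (∑ i ∈ range (k + 1), coeff i f) * (1 - constantCoeff f)⁻¹ := by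
            rw [← sum_mul, Nat.sum_antidiagonal_eq_sum_range_succ fun i _ => coeff i f]
        _ ≤ (1 - constantCoeff f)⁻¹ := by
            grw [ENNReal.sum_le_tsum, hf, one_mul]

theorem tsum_kernelEval_pow_le {f : ℝ≥0∞⟦X⟧} (hf : ∑' i, coeff i f ≤ 1)
    (K : ℕ → V → V → ℝ≥0∞) (x y : V) :
    ∑' n, kernelEval (f ^ n) K x y ≤ (1 - constantCoeff f)⁻¹ * ∑' k, K k x y := by
  calc ∑' n, kernelEval (f ^ n) K x y = ∑' k, (∑' n, coeff k (f ^ n)) * K k x y := by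
        simp only [kernelEval, ← ENNReal.tsum_mul_right]
        exact ENNReal.tsum_comm
    _ ≤ ∑' k, (1 - constantCoeff f)⁻¹ * K k x y := by
        gcongr with k
        exact ENNReal.tsum_le_of_sum_range_le (sum_range_coeff_pow_le hf · k)
    _ = (1 - constantCoeff f)⁻¹ * ∑' k, K k x y := ENNReal.tsum_mul_left

end PowerSeries

theorem tsum_ite_mem_mul (s : Finset ℕ) (p g : ℕ → ℝ≥0∞) :
    ∑' i, (if i ∈ s then p i else 0) * g i = ∑ i ∈ s, p i * g i := by
  rw [tsum_eq_sum fun i hi => by rw [if_neg hi, zero_mul]]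
  exact sum_congr rfl fun i hi => by rw [if_pos hi]

open Classical ENNReal in
theorem stmt15_general {V : Type*} (P : V → V → ℝ≥0∞)
    (Ppow : ℕ → V → V → ℝ≥0∞)
    (hPpow0 : ∀ x y : V, Ppow 0 x y = if x = y then 1 else 0)
    (hPpowS : ∀ (n : ℕ) (x y : V), Ppow (n + 1) x y = ∑' z : V, Ppow n x z * P z y)
    (m : ℕ) (p : ℕ → ℝ≥0∞)
    (hsum : ∑ i ∈ Finset.range (m + 1), p i = 1)
    (Q : V → V → ℝ≥0∞)
    (hQ : ∀ x y : V, Q x y = ∑ i ∈ Finset.range (m + 1), p i * Ppow i x y)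
    (Qpow : ℕ → V → V → ℝ≥0∞)
    (hQpow0 : ∀ x y : V, Qpow 0 x y = if x = y then 1 else 0)
    (hQpowS : ∀ (n : ℕ) (x y : V), Qpow (n + 1) x y = ∑' z : V, Qpow n x z * Q z y)
    (x : V) :
    (∑' n : ℕ, Qpow n x x) ≤ (1 - p 0)⁻¹ * ∑' n : ℕ, Ppow n x x := by
  set f : ℝ≥0∞⟦X⟧ := mk fun i => if i ∈ range (m + 1) then p i else 0
  have hf : ∑' i, coeff i f ≤ 1 := by
    simpa [f, hsum] using (tsum_ite_mem_mul (range (m + 1)) p 1).le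
  have hQf : ∀ x y, Q x y = kernelEval f Ppow x y := fun x y => by
    rw [hQ, kernelEval, ← tsum_ite_mem_mul]
    simp [f]
  have hQpow : ∀ n x y, Qpow n x y = kernelEval (f ^ n) Ppow x y :=
    eq_kernelEval_pow (chapman_kolmogorov P Ppow hPpow0 hPpowS)
      (fun x y => by rw [hQpow0, hPpow0]) (fun n x y => by rw [hQpowS]; simp only [hQf])
  have hf0 : constantCoeff f = p 0 := by simp [f, ← coeff_zero_eq_constantCoeff_apply]
  simpa only [hQpow, hf0] using tsum_kernelEval_pow_le hf Ppow x x

open Classical ENNReal in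
/-- Let `P` be an irreducible Markov kernel and `Q = ∑_{i=0}^m p_i P^i` with
`∑ p_i = 1` and `p_0 > 0`.  Then `∑ₙ Qⁿ(x,x) ≤ (1 - p_0)⁻¹ ∑ₙ Pⁿ(x,x)`. -/
theorem stmt15 {V : Type*} [Countable V] (P : V → V → ℝ≥0∞)
    (hMarkov : ∀ x : V, ∑' y : V, P x y = 1)
    (Ppow : ℕ → V → V → ℝ≥0∞)
    (hPpow0 : ∀ x y : V, Ppow 0 x y = if x = y then 1 else 0)
    (hPpowS : ∀ (n : ℕ) (x y : V), Ppow (n + 1) x y = ∑' z : V, Ppow n x z * P z y)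
    (hirr : ∀ x y : V, ∃ n : ℕ, 0 < Ppow n x y)
    (m : ℕ) (p : ℕ → ℝ≥0∞)
    (hsum : ∑ i ∈ Finset.range (m + 1), p i = 1)
    (hp0 : 0 < p 0)
    (Q : V → V → ℝ≥0∞)
    (hQ : ∀ x y : V, Q x y = ∑ i ∈ Finset.range (m + 1), p i * Ppow i x y)
    (Qpow : ℕ → V → V → ℝ≥0∞)
    (hQpow0 : ∀ x y : V, Qpow 0 x y = if x = y then 1 else 0)
    (hQpowS : ∀ (n : ℕ) (x y : V), Qpow (n + 1) x y = ∑' z : V, Qpow n x z * Q z y)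
    (x : V) :
    (∑' n : ℕ, Qpow n x x) ≤ (1 - p 0)⁻¹ * ∑' n : ℕ, Ppow n x x :=
  stmt15_general P Ppow hPpow0 hPpowS m p hsum Q hQ Qpow hQpow0 hQpowS x
end
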